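/- Let V₁,…,V₅ : I → E⁵ be a Frenet frame with positive smooth curvatures k₁,k₂,k₃,k₄ satisfying the Frenet equations on an open interval I. Let θ : I → ℝ be a function with θ′ = k₄ on I, and let F, G : I → ℝ be functions with F′(s) = (k₁k₃/k₂)(s)·sin θ(s) and G′(s) = (k₁k₃/k₂)(s)·cos θ(s) on I. Then there exists a constant unit vector U ∈ E⁵ such that s ↦ ⟪V₁(s), U⟫ is a nonzero constant on I (i.e., the curve is a V₁-helix) if and only if there exist real constants A and B such that (1/k₃)(s)·(k₁/k₂)′(s) = (A − F(s))·sin θ(s) − (B + G(s))·cos θ(s) for all s ∈ I. -/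

import Mathlib

/-! If `⟪V₁, U⟫ = c` is constant, differentiating through the Frenet equations gives
`⟪V₂, U⟫ = 0`, `⟪V₃, U⟫ = c k₁/k₂` and `(k₁/k₂)' = k₃ ⟪V₄, U⟫/c`, while
`(x, y) = (⟪V₄, U⟫, ⟪V₅, U⟫)/c` solves the forced rotation system `x' = k₄ y - k₁k₃/k₂`,
`y' = -k₄ x`. Rotating by the angle `θ` turns this system into
`(x sin θ + y cos θ + F)' = 0 = (x cos θ - y sin θ + G)'`, whose solutions are exactly
`x = (A - F) sin θ - (B + G) cos θ`. Conversely, for such `x` and the matching `y`, the axis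
`V₁ + (k₁/k₂) V₃ + x V₄ + y V₅` (which is `U / c` above) has derivative zero, and its inner
product with `V₁` is `1`. -/

open Real Set
open scoped RealInnerProductSpace ContDiff

variable {E : Type*} [NormedAddCommGroup E] [InnerProductSpace ℝ E]

lemma exists_eq_const_of_hasDerivAt_zero {I : Set ℝ} {f : ℝ → E} (hI : IsOpen I)
    (hI' : IsPreconnected I) (hf : ∀ s ∈ I, HasDerivAt f 0 s) : ∃ C, ∀ s ∈ I, f s = C :=
  hI.exists_is_const_of_deriv_eq_zero hI'
    (fun s hs => (hf s hs).differentiableAt.differentiableWithinAt) (fun s hs => (hf s hs).deriv)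

lemma HasDerivAt.congr_of_eqOn {I : Set ℝ} {f g : ℝ → E} {f' : E} {s : ℝ} (h : HasDerivAt f f' s)
    (hI : IsOpen I) (hs : s ∈ I) (hfg : EqOn f g I) : HasDerivAt g f' s :=
  h.congr_of_eventuallyEq (hfg.symm.eventuallyEq_of_mem (hI.mem_nhds hs))

lemma HasDerivAt.inner_const {f : ℝ → E} {f' : E} {s : ℝ} (h : HasDerivAt f f' s) (U : E) :
    HasDerivAt (fun t => ⟪f t, U⟫) ⟪f', U⟫ s := by
  simpa using h.inner ℝ (hasDerivAt_const s U)

lemma exists_norm_eq_one_inner_eq_const {ι : Type*} {S : Set ι} {V : ι → E} {W : E}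
    (hS : S.Nonempty) (hW : ∀ s ∈ S, ⟪V s, W⟫ = 1) :
    ∃ U : E, ‖U‖ = 1 ∧ ∃ c : ℝ, c ≠ 0 ∧ ∀ s ∈ S, ⟪V s, U⟫ = c := by
  obtain ⟨s₀, hs₀⟩ := hS
  have hW0 : ‖W‖ ≠ 0 := by
    rintro h
    simpa [norm_eq_zero.mp h] using hW s₀ hs₀
  refine ⟨‖W‖⁻¹ • W, ?_, ‖W‖⁻¹, inv_ne_zero hW0, fun s hs => ?_⟩
  · rw [norm_smul, norm_inv, norm_norm, inv_mul_cancel₀ hW0]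
  · rw [real_inner_smul_right, hW s hs, mul_one]

lemma hasDerivAt_forced_rotation {θ F G : ℝ → ℝ} {κ m : ℝ} (A B : ℝ) {s : ℝ}
    (hθ : HasDerivAt θ κ s) (hF : HasDerivAt F (m * sin (θ s)) s)
    (hG : HasDerivAt G (m * cos (θ s)) s) :
    HasDerivAt (fun t => (A - F t) * sin (θ t) - (B + G t) * cos (θ t))
        (κ * ((A - F s) * cos (θ s) + (B + G s) * sin (θ s)) - m) s ∧
      HasDerivAt (fun t => (A - F t) * cos (θ t) + (B + G t) * sin (θ t))
        (-κ * ((A - F s) * sin (θ s) - (B + G s) * cos (θ s))) s := by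
  constructor
  · refine (((hF.const_sub A).mul hθ.sin).sub ((hG.const_add B).mul hθ.cos)).congr_deriv ?_
    linear_combination (-m) * sin_sq_add_cos_sq (θ s)
  · refine (((hF.const_sub A).mul hθ.cos).add ((hG.const_add B).mul hθ.sin)).congr_deriv ?_
    ring

lemma exists_eq_of_hasDerivAt_forced_rotation {I : Set ℝ} {θ κ m F G x y : ℝ → ℝ}
    (hI : IsOpen I) (hI' : IsPreconnected I) (hθ : ∀ s ∈ I, HasDerivAt θ (κ s) s)
    (hF : ∀ s ∈ I, HasDerivAt F (m s * sin (θ s)) s)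
    (hG : ∀ s ∈ I, HasDerivAt G (m s * cos (θ s)) s)
    (hx : ∀ s ∈ I, HasDerivAt x (κ s * y s - m s) s)
    (hy : ∀ s ∈ I, HasDerivAt y (-κ s * x s) s) :
    ∃ A B : ℝ, ∀ s ∈ I, x s = (A - F s) * sin (θ s) - (B + G s) * cos (θ s) := by
  obtain ⟨A, hA⟩ := exists_eq_const_of_hasDerivAt_zero hI hI'
    (f := fun t => x t * sin (θ t) + y t * cos (θ t) + F t) fun s hs => by
      refine ((((hx s hs).mul (hθ s hs).sin).add ((hy s hs).mul (hθ s hs).cos)).add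
        (hF s hs)).congr_deriv ?_
      ring
  obtain ⟨B, hB⟩ := exists_eq_const_of_hasDerivAt_zero hI hI'
    (f := fun t => x t * cos (θ t) - y t * sin (θ t) + G t) fun s hs => by
      refine ((((hx s hs).mul (hθ s hs).cos).sub ((hy s hs).mul (hθ s hs).sin)).add
        (hG s hs)).congr_deriv ?_
      ring
  refine ⟨A, -B, fun s hs => ?_⟩
  linear_combination sin (θ s) * hA s hs + cos (θ s) * hB s hs - x s * sin_sq_add_cos_sq (θ s)

structure FrenetEquations (I : Set ℝ) (V₁ V₂ V₃ V₄ V₅ : ℝ → E) (k₁ k₂ k₃ k₄ : ℝ → ℝ) : Prop where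
  hasDerivAt₁ : ∀ s ∈ I, HasDerivAt V₁ (k₁ s • V₂ s) s
  hasDerivAt₂ : ∀ s ∈ I, HasDerivAt V₂ (-(k₁ s) • V₁ s + k₂ s • V₃ s) s
  hasDerivAt₃ : ∀ s ∈ I, HasDerivAt V₃ (-(k₂ s) • V₂ s + k₃ s • V₄ s) s
  hasDerivAt₄ : ∀ s ∈ I, HasDerivAt V₄ (-(k₃ s) • V₃ s + k₄ s • V₅ s) s
  hasDerivAt₅ : ∀ s ∈ I, HasDerivAt V₅ (-(k₄ s) • V₄ s) s

namespace FrenetEquations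

variable {I : Set ℝ} {V₁ V₂ V₃ V₄ V₅ : ℝ → E} {k₁ k₂ k₃ k₄ : ℝ → ℝ} {U : E} {c : ℝ}

lemma inner_V₂_eq_zero_of_inner_V₁_eq (hV : FrenetEquations I V₁ V₂ V₃ V₄ V₅ k₁ k₂ k₃ k₄)
    (hI : IsOpen I) (hk₁ : ∀ s ∈ I, k₁ s ≠ 0) (hc : ∀ s ∈ I, ⟪V₁ s, U⟫ = c) :
    ∀ s ∈ I, ⟪V₂ s, U⟫ = 0 := by
  intro s hs
  have h := ((hV.hasDerivAt₁ s hs).inner_const U).unique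
    ((hasDerivAt_const s c).congr_of_eqOn hI hs fun t ht => (hc t ht).symm)
  rw [real_inner_smul_left] at h
  exact (mul_eq_zero.mp h).resolve_left (hk₁ s hs)

lemma inner_V₃_eq_of_inner_V₁_eq (hV : FrenetEquations I V₁ V₂ V₃ V₄ V₅ k₁ k₂ k₃ k₄)
    (hI : IsOpen I) (hk₁ : ∀ s ∈ I, k₁ s ≠ 0) (hk₂ : ∀ s ∈ I, k₂ s ≠ 0)
    (hc : ∀ s ∈ I, ⟪V₁ s, U⟫ = c) :
    ∀ s ∈ I, ⟪V₃ s, U⟫ = c * (k₁ s / k₂ s) := by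
  intro s hs
  have h := ((hV.hasDerivAt₂ s hs).inner_const U).unique
    ((hasDerivAt_const s 0).congr_of_eqOn hI hs fun t ht =>
      (hV.inner_V₂_eq_zero_of_inner_V₁_eq hI hk₁ hc t ht).symm)
  rw [inner_add_left, real_inner_smul_left, real_inner_smul_left, hc s hs] at h
  field_simp [hk₂ s hs]
  linarith

lemma hasDerivAt_div_of_inner_V₁_eq (hV : FrenetEquations I V₁ V₂ V₃ V₄ V₅ k₁ k₂ k₃ k₄)
    (hI : IsOpen I) (hk₁ : ∀ s ∈ I, k₁ s ≠ 0) (hk₂ : ∀ s ∈ I, k₂ s ≠ 0) (hc₀ : c ≠ 0)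
    (hc : ∀ s ∈ I, ⟪V₁ s, U⟫ = c) :
    ∀ s ∈ I, HasDerivAt (fun t => k₁ t / k₂ t) (k₃ s * (⟪V₄ s, U⟫ / c)) s := by
  intro s hs
  have h := (((hV.hasDerivAt₃ s hs).inner_const U).congr_of_eqOn hI hs
    (hV.inner_V₃_eq_of_inner_V₁_eq hI hk₁ hk₂ hc)).const_mul c⁻¹
  rw [inner_add_left, real_inner_smul_left, real_inner_smul_left,
    hV.inner_V₂_eq_zero_of_inner_V₁_eq hI hk₁ hc s hs] at h
  simp only [inv_mul_cancel_left₀ hc₀] at h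
  exact h.congr_deriv (by ring)

lemma hasDerivAt_inner_V₄_div_of_inner_V₁_eq
    (hV : FrenetEquations I V₁ V₂ V₃ V₄ V₅ k₁ k₂ k₃ k₄)
    (hI : IsOpen I) (hk₁ : ∀ s ∈ I, k₁ s ≠ 0) (hk₂ : ∀ s ∈ I, k₂ s ≠ 0) (hc₀ : c ≠ 0)
    (hc : ∀ s ∈ I, ⟪V₁ s, U⟫ = c) :
    ∀ s ∈ I, HasDerivAt (fun t => ⟪V₄ t, U⟫ / c)
      (k₄ s * (⟪V₅ s, U⟫ / c) - k₁ s * k₃ s / k₂ s) s := by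
  intro s hs
  have h := ((hV.hasDerivAt₄ s hs).inner_const U).div_const c
  rw [inner_add_left, real_inner_smul_left, real_inner_smul_left,
    hV.inner_V₃_eq_of_inner_V₁_eq hI hk₁ hk₂ hc s hs] at h
  refine h.congr_deriv ?_
  field_simp
  ring

lemma hasDerivAt_inner_V₅_div (hV : FrenetEquations I V₁ V₂ V₃ V₄ V₅ k₁ k₂ k₃ k₄)
    {s : ℝ} (hs : s ∈ I) :
    HasDerivAt (fun t => ⟪V₅ t, U⟫ / c) (-k₄ s * (⟪V₄ s, U⟫ / c)) s := by
  have h := ((hV.hasDerivAt₅ s hs).inner_const U).div_const c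
  rw [real_inner_smul_left] at h
  exact h.congr_deriv (by ring)

lemma exists_deriv_div_eq_of_inner_V₁_eq (hV : FrenetEquations I V₁ V₂ V₃ V₄ V₅ k₁ k₂ k₃ k₄)
    (hI : IsOpen I) (hI' : IsPreconnected I) (hk₁ : ∀ s ∈ I, k₁ s ≠ 0)
    (hk₂ : ∀ s ∈ I, k₂ s ≠ 0) (hk₃ : ∀ s ∈ I, k₃ s ≠ 0) {θ F G : ℝ → ℝ}
    (hθ : ∀ s ∈ I, HasDerivAt θ (k₄ s) s)
    (hF : ∀ s ∈ I, HasDerivAt F (k₁ s * k₃ s / k₂ s * sin (θ s)) s)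
    (hG : ∀ s ∈ I, HasDerivAt G (k₁ s * k₃ s / k₂ s * cos (θ s)) s)
    (hc₀ : c ≠ 0) (hc : ∀ s ∈ I, ⟪V₁ s, U⟫ = c) :
    ∃ A B : ℝ, ∀ s ∈ I, (1 / k₃ s) * deriv (fun t => k₁ t / k₂ t) s
      = (A - F s) * sin (θ s) - (B + G s) * cos (θ s) := by
  obtain ⟨A, B, hAB⟩ := exists_eq_of_hasDerivAt_forced_rotation hI hI' hθ hF hG
    (hV.hasDerivAt_inner_V₄_div_of_inner_V₁_eq hI hk₁ hk₂ hc₀ hc)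
    fun s hs => hV.hasDerivAt_inner_V₅_div hs
  refine ⟨A, B, fun s hs => ?_⟩
  rw [(hV.hasDerivAt_div_of_inner_V₁_eq hI hk₁ hk₂ hc₀ hc s hs).deriv, ← hAB s hs]
  field_simp [hk₃ s hs]

lemma hasDerivAt_axis (hV : FrenetEquations I V₁ V₂ V₃ V₄ V₅ k₁ k₂ k₃ k₄) {x y : ℝ → ℝ}
    {s : ℝ} (hs : s ∈ I) (hk₂ : k₂ s ≠ 0)
    (hr : HasDerivAt (fun t => k₁ t / k₂ t) (k₃ s * x s) s)
    (hx : HasDerivAt x (k₄ s * y s - k₁ s * k₃ s / k₂ s) s)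
    (hy : HasDerivAt y (-k₄ s * x s) s) :
    HasDerivAt (fun t => V₁ t + (k₁ t / k₂ t) • V₃ t + x t • V₄ t + y t • V₅ t) 0 s := by
  refine ((((hV.hasDerivAt₁ s hs).add (hr.smul (hV.hasDerivAt₃ s hs))).add
    (hx.smul (hV.hasDerivAt₄ s hs))).add (hy.smul (hV.hasDerivAt₅ s hs))).congr_deriv ?_
  match_scalars <;> field_simp <;> ring

lemma exists_inner_V₁_eq_one_of_deriv_div_eq
    (hV : FrenetEquations I V₁ V₂ V₃ V₄ V₅ k₁ k₂ k₃ k₄) (hI : IsOpen I) (hI' : IsPreconnected I)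
    (horth : ∀ s ∈ I, Orthonormal ℝ ![V₁ s, V₂ s, V₃ s, V₄ s, V₅ s])
    (hdiff : DifferentiableOn ℝ (fun t => k₁ t / k₂ t) I)
    (hk₂ : ∀ s ∈ I, k₂ s ≠ 0) (hk₃ : ∀ s ∈ I, k₃ s ≠ 0) {θ F G : ℝ → ℝ} {A B : ℝ}
    (hθ : ∀ s ∈ I, HasDerivAt θ (k₄ s) s)
    (hF : ∀ s ∈ I, HasDerivAt F (k₁ s * k₃ s / k₂ s * sin (θ s)) s)
    (hG : ∀ s ∈ I, HasDerivAt G (k₁ s * k₃ s / k₂ s * cos (θ s)) s)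
    (hAB : ∀ s ∈ I, (1 / k₃ s) * deriv (fun t => k₁ t / k₂ t) s
      = (A - F s) * sin (θ s) - (B + G s) * cos (θ s)) :
    ∃ W : E, ∀ s ∈ I, ⟪V₁ s, W⟫ = 1 := by
  have hr : ∀ s ∈ I, HasDerivAt (fun t => k₁ t / k₂ t)
      (k₃ s * ((A - F s) * sin (θ s) - (B + G s) * cos (θ s))) s := by
    intro s hs
    rw [← hAB s hs, one_div, mul_inv_cancel_left₀ (hk₃ s hs)]
    exact (hdiff.differentiableAt (hI.mem_nhds hs)).hasDerivAt
  obtain ⟨W, hW⟩ := exists_eq_const_of_hasDerivAt_zero hI hI' fun s hs =>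
    have hxy := hasDerivAt_forced_rotation A B (hθ s hs) (hF s hs) (hG s hs)
    hV.hasDerivAt_axis hs (hk₂ s hs) (hr s hs) hxy.1 hxy.2
  refine ⟨W, fun s hs => ?_⟩
  have h := orthonormal_iff_ite.mp (horth s hs)
  have e₁₁ : ⟪V₁ s, V₁ s⟫ = 1 := by simpa using h 0 0
  have e₁₃ : ⟪V₁ s, V₃ s⟫ = 0 := by simpa using h 0 2
  have e₁₄ : ⟪V₁ s, V₄ s⟫ = 0 := by simpa using h 0 3
  have e₁₅ : ⟪V₁ s, V₅ s⟫ = 0 := by simpa using h 0 4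
  simp only [← hW s hs, inner_add_right, real_inner_smul_right, e₁₁, e₁₃, e₁₄, e₁₅, mul_zero,
    add_zero]

end FrenetEquations

theorem stmt_3_general
    (a b : ℝ) (hab : a < b)
    (V₁ V₂ V₃ V₄ V₅ : ℝ → EuclideanSpace ℝ (Fin 5))
    (k₁ k₂ k₃ k₄ : ℝ → ℝ)
    (hk₁s : ContDiffOn ℝ ∞ k₁ (Set.Ioo a b))
    (hk₂s : ContDiffOn ℝ ∞ k₂ (Set.Ioo a b))
    (hk₁ : ∀ s ∈ Set.Ioo a b, 0 < k₁ s)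
    (hk₂ : ∀ s ∈ Set.Ioo a b, 0 < k₂ s)
    (hk₃ : ∀ s ∈ Set.Ioo a b, 0 < k₃ s)
    (horth : ∀ s ∈ Set.Ioo a b, Orthonormal ℝ ![V₁ s, V₂ s, V₃ s, V₄ s, V₅ s])
    (hF₁ : ∀ s ∈ Set.Ioo a b, HasDerivAt V₁ (k₁ s • V₂ s) s)
    (hF₂ : ∀ s ∈ Set.Ioo a b, HasDerivAt V₂ (-(k₁ s) • V₁ s + k₂ s • V₃ s) s)
    (hF₃ : ∀ s ∈ Set.Ioo a b, HasDerivAt V₃ (-(k₂ s) • V₂ s + k₃ s • V₄ s) s)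
    (hF₄ : ∀ s ∈ Set.Ioo a b, HasDerivAt V₄ (-(k₃ s) • V₃ s + k₄ s • V₅ s) s)
    (hF₅ : ∀ s ∈ Set.Ioo a b, HasDerivAt V₅ (-(k₄ s) • V₄ s) s)
    (θ F G : ℝ → ℝ)
    (hθ : ∀ s ∈ Set.Ioo a b, HasDerivAt θ (k₄ s) s)
    (hF : ∀ s ∈ Set.Ioo a b, HasDerivAt F (k₁ s * k₃ s / k₂ s * Real.sin (θ s)) s)
    (hG : ∀ s ∈ Set.Ioo a b, HasDerivAt G (k₁ s * k₃ s / k₂ s * Real.cos (θ s)) s) :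
    (∃ U : EuclideanSpace ℝ (Fin 5), ‖U‖ = 1 ∧
        ∃ c : ℝ, c ≠ 0 ∧ ∀ s ∈ Set.Ioo a b, ⟪V₁ s, U⟫ = c) ↔
    (∃ A B : ℝ, ∀ s ∈ Set.Ioo a b,
        (1 / k₃ s) * deriv (fun t => k₁ t / k₂ t) s
          = (A - F s) * Real.sin (θ s) - (B + G s) * Real.cos (θ s)) := by
  have hV : FrenetEquations (Ioo a b) V₁ V₂ V₃ V₄ V₅ k₁ k₂ k₃ k₄ := ⟨hF₁, hF₂, hF₃, hF₄, hF₅⟩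
  have hk₁' := fun s hs => (hk₁ s hs).ne'
  have hk₂' := fun s hs => (hk₂ s hs).ne'
  have hk₃' := fun s hs => (hk₃ s hs).ne'
  constructor
  · rintro ⟨U, -, c, hc₀, hc⟩
    exact hV.exists_deriv_div_eq_of_inner_V₁_eq isOpen_Ioo isPreconnected_Ioo hk₁' hk₂' hk₃'
      hθ hF hG hc₀ hc
  · rintro ⟨A, B, hAB⟩
    have hdiff : DifferentiableOn ℝ (fun t => k₁ t / k₂ t) (Ioo a b) :=
      (hk₁s.differentiableOn (by simp)).div (hk₂s.differentiableOn (by simp)) hk₂'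
    obtain ⟨W, hW⟩ := hV.exists_inner_V₁_eq_one_of_deriv_div_eq isOpen_Ioo isPreconnected_Ioo
      horth hdiff hk₂' hk₃' hθ hF hG hAB
    exact exists_norm_eq_one_inner_eq_const (nonempty_Ioo.mpr hab) hW

theorem stmt_3
    (a b : ℝ) (hab : a < b)
    (V₁ V₂ V₃ V₄ V₅ : ℝ → EuclideanSpace ℝ (Fin 5))
    (k₁ k₂ k₃ k₄ : ℝ → ℝ)
    (hV₁s : ContDiffOn ℝ ∞ V₁ (Set.Ioo a b))
    (hV₂s : ContDiffOn ℝ ∞ V₂ (Set.Ioo a b))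
    (hV₃s : ContDiffOn ℝ ∞ V₃ (Set.Ioo a b))
    (hV₄s : ContDiffOn ℝ ∞ V₄ (Set.Ioo a b))
    (hV₅s : ContDiffOn ℝ ∞ V₅ (Set.Ioo a b))
    (hk₁s : ContDiffOn ℝ ∞ k₁ (Set.Ioo a b))
    (hk₂s : ContDiffOn ℝ ∞ k₂ (Set.Ioo a b))
    (hk₃s : ContDiffOn ℝ ∞ k₃ (Set.Ioo a b))
    (hk₄s : ContDiffOn ℝ ∞ k₄ (Set.Ioo a b))
    (hk₁ : ∀ s ∈ Set.Ioo a b, 0 < k₁ s)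
    (hk₂ : ∀ s ∈ Set.Ioo a b, 0 < k₂ s)
    (hk₃ : ∀ s ∈ Set.Ioo a b, 0 < k₃ s)
    (hk₄ : ∀ s ∈ Set.Ioo a b, 0 < k₄ s)
    (horth : ∀ s ∈ Set.Ioo a b, Orthonormal ℝ ![V₁ s, V₂ s, V₃ s, V₄ s, V₅ s])
    (hF₁ : ∀ s ∈ Set.Ioo a b, HasDerivAt V₁ (k₁ s • V₂ s) s)
    (hF₂ : ∀ s ∈ Set.Ioo a b, HasDerivAt V₂ (-(k₁ s) • V₁ s + k₂ s • V₃ s) s)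
    (hF₃ : ∀ s ∈ Set.Ioo a b, HasDerivAt V₃ (-(k₂ s) • V₂ s + k₃ s • V₄ s) s)
    (hF₄ : ∀ s ∈ Set.Ioo a b, HasDerivAt V₄ (-(k₃ s) • V₃ s + k₄ s • V₅ s) s)
    (hF₅ : ∀ s ∈ Set.Ioo a b, HasDerivAt V₅ (-(k₄ s) • V₄ s) s)
    (θ F G : ℝ → ℝ)
    (hθ : ∀ s ∈ Set.Ioo a b, HasDerivAt θ (k₄ s) s)
    (hF : ∀ s ∈ Set.Ioo a b, HasDerivAt F (k₁ s * k₃ s / k₂ s * Real.sin (θ s)) s)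
    (hG : ∀ s ∈ Set.Ioo a b, HasDerivAt G (k₁ s * k₃ s / k₂ s * Real.cos (θ s)) s) :
    (∃ U : EuclideanSpace ℝ (Fin 5), ‖U‖ = 1 ∧
        ∃ c : ℝ, c ≠ 0 ∧ ∀ s ∈ Set.Ioo a b, ⟪V₁ s, U⟫ = c) ↔
    (∃ A B : ℝ, ∀ s ∈ Set.Ioo a b,
        (1 / k₃ s) * deriv (fun t => k₁ t / k₂ t) s
          = (A - F s) * Real.sin (θ s) - (B + G s) * Real.cos (θ s)) :=
  stmt_3_general a b hab V₁ V₂ V₃ V₄ V₅ k₁ k₂ k₃ k₄ hk₁s hk₂s hk₁ hk₂ hk₃ horth hF₁ hF₂ hF₃ hF₄ hF₅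
    θ F G hθ hF hG
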